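/- arXiv:2107.00770 — 2 statements merged into one kernel-verified Lean document; each statement's English description precedes it below -/
import Mathlib

section
/- For every nonnegative integer n, ₃F₂(-n, (n+1)/2, (n+2)/2; 2/3, 4/3; 1) = (4·(-8)ⁿ - 1)/(3(3n+1)·4ⁿ). -/
open scoped BigOperators

/-- Pochhammer symbol `(a)_n = a(a+1)⋯(a+n-1)`. -/
noncomputable def poch (a : ℝ) (n : ℕ) : ℝ := ∏ i ∈ Finset.range n, (a + i)

noncomputable def tt (n k : ℕ) : ℝ :=
  (-1)^k * (27/4)^k * ((n+2*k).factorial : ℝ) / (((n-k).factorial : ℝ) * ((3*k+1).factorial : ℝ))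

lemma fac_ne (m : ℕ) : ((m.factorial : ℝ)) ≠ 0 :=
  Nat.cast_ne_zero.mpr (Nat.factorial_ne_zero m)

lemma poch_succ (a : ℝ) (k : ℕ) : poch a (k+1) = poch a k * (a + k) :=
  Finset.prod_range_succ _ _

lemma fs (m : ℕ) : ((m+1).factorial : ℝ) = ((m:ℝ)+1) * (m.factorial : ℝ) := by
  rw [Nat.factorial_succ]; push_cast; ring

lemma L1 (n : ℕ) : ∀ k, k ≤ n → poch (-(n:ℝ)) k * ((n-k).factorial : ℝ) = (-1)^k * (n.factorial : ℝ) := by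
  intro k
  induction k with
  | zero => simp [poch]
  | succ k ih =>
    intro hk
    have hk' : k ≤ n := by omega
    have ihh := ih hk'
    have h1 : ((n-k).factorial : ℝ) = ((n-(k+1):ℕ) + 1) * ((n-(k+1)).factorial : ℝ) := by
      rw [show n - k = (n-(k+1))+1 from by omega, fs]
    rw [h1] at ihh
    have h3 : ((n - (k+1) : ℕ) : ℝ) = (n:ℝ) - (k+1) := by
      push_cast [Nat.cast_sub hk]; ring
    rw [h3] at ihh
    rw [poch_succ]
    push_cast
    linear_combination (-1 : ℝ) * ihh

lemma L2 (n : ℕ) : ∀ k, (poch (((n:ℝ)+1)/2) k * poch (((n:ℝ)+2)/2) k) * ((n.factorial : ℝ) * 4^k)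
    = ((n+2*k).factorial : ℝ) := by
  intro k
  induction k with
  | zero => simp [poch]
  | succ k ih =>
    have hA : ((n+2*(k+1)).factorial : ℝ)
        = (((n:ℝ)+2*k+2)) * (((n:ℝ)+2*k+1)) * ((n+2*k).factorial : ℝ) := by
      rw [show n+2*(k+1) = (n+2*k+1)+1 from by omega, fs,
          show n+2*k+1 = (n+2*k)+1 from by omega, fs]
      push_cast; ring
    rw [hA, poch_succ, poch_succ]
    push_cast
    linear_combination ((((n:ℝ)+1)/2 + k) * (((n:ℝ)+2)/2 + k) * 4) * ih

lemma L3 : ∀ k, (poch (2/3) k * poch (4/3) k) * ((k.factorial : ℝ) * 27^k)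
    = ((3*k+1).factorial : ℝ) := by
  intro k
  induction k with
  | zero => simp [poch]
  | succ k ih =>
    have hA : ((3*(k+1)+1).factorial : ℝ)
        = (3*(k:ℝ)+4) * (3*(k:ℝ)+3) * (3*(k:ℝ)+2) * ((3*k+1).factorial : ℝ) := by
      rw [show 3*(k+1)+1 = (3*k+3)+1 from by omega, fs,
          show 3*k+3 = (3*k+2)+1 from by omega, fs,
          show 3*k+2 = (3*k+1)+1 from by omega, fs]
      push_cast; ring
    rw [hA, poch_succ, poch_succ, fs]
    push_cast
    linear_combination (((2:ℝ)/3 + k) * ((4:ℝ)/3 + k) * ((k:ℝ)+1) * 27) * ih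

lemma summand_eq (n k : ℕ) (hk : k ≤ n) :
    poch (-(n:ℝ)) k * poch (((n:ℝ)+1)/2) k * poch (((n:ℝ)+2)/2) k /
        (poch (2/3) k * poch (4/3) k * (Nat.factorial k)) = tt n k := by
  have h1 := L1 n k hk
  have h2 := L2 n k
  have h3 := L3 k
  have e1 : poch (-(n:ℝ)) k = (-1)^k * (n.factorial : ℝ) / ((n-k).factorial : ℝ) :=
    (eq_div_iff (fac_ne _)).mpr h1
  have e2 : poch (((n:ℝ)+1)/2) k * poch (((n:ℝ)+2)/2) k
      = ((n+2*k).factorial : ℝ) / ((n.factorial : ℝ) * 4^k) :=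
    (eq_div_iff (by positivity)).mpr h2
  have e3 : poch (2/3) k * poch (4/3) k * ((k.factorial : ℝ))
      = ((3*k+1).factorial : ℝ) / ((27:ℝ)^k) := by
    rw [eq_div_iff (by positivity)]; linear_combination h3
  rw [mul_assoc, e1, e2, e3, tt]
  rw [div_eq_div_iff (by positivity) (by positivity)]
  field_simp
  ring_nf
  rw [← mul_pow]; norm_num

noncomputable def te (n k : ℕ) : ℝ := if k ≤ n then tt n k else 0

noncomputable def gg (n k : ℕ) : ℝ :=
  if k ≤ n+2 then
    -12 * (-1)^k * (27/4)^k * k * (3*(k:ℝ)-1) * ((n+2*k).factorial : ℝ)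
      / (((n+2-k).factorial : ℝ) * ((3*k).factorial : ℝ))
  else 0

lemma fexp (a b : ℕ) (h : a = b) : ((a.factorial : ℝ)) = (b.factorial : ℝ) := by rw [h]

lemma step (n k : ℕ) (hk : k ≤ n+2) :
    4*(3*(n:ℝ)+7) * tt (n+2) k + 7*(3*(n:ℝ)+4) * te (n+1) k - 2*(3*(n:ℝ)+1) * te n k
      = gg n (k+1) - gg n k := by
  rcases Nat.lt_or_ge n k with hnk | hnk
  · rcases Nat.lt_or_ge (n+1) k with hnk1 | hnk1
    · -- k = n+2
      have hk2 : k = n+2 := by omega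
      subst hk2
      simp only [te, gg, tt]
      split_ifs <;> try (exfalso; omega)
      have hA : (((n+2)+2*(n+2)).factorial : ℝ)
          = (3*(n:ℝ)+6)*(3*(n:ℝ)+5)*((3*n+4).factorial : ℝ) := by
        rw [fexp _ ((3*n+4)+1+1) (by omega), fs, fs]; push_cast; ring_nf
      have hB : (((n+2)-(n+2)).factorial : ℝ) = 1 := by
        rw [fexp _ 0 (by omega)]; simp
      have hC : ((3*(n+2)+1).factorial : ℝ)
          = (3*(n:ℝ)+7)*(3*(n:ℝ)+6)*(3*(n:ℝ)+5)*((3*n+4).factorial : ℝ) := by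
        rw [fexp _ ((3*n+4)+1+1+1) (by omega), fs, fs, fs]; push_cast; ring_nf
      have hD : ((n+2*(n+2)).factorial : ℝ) = ((3*n+4).factorial : ℝ) := by
        rw [fexp _ (3*n+4) (by omega)]
      have hE : ((3*(n+2)).factorial : ℝ)
          = (3*(n:ℝ)+6)*(3*(n:ℝ)+5)*((3*n+4).factorial : ℝ) := by
        rw [fexp _ ((3*n+4)+1+1) (by omega), fs, fs]; push_cast; ring_nf
      rw [hA, hB, hC, hD, hE]
      have h1 := fac_ne (3*n+4)
      push_cast
      field_simp
      ring
    · -- k = n+1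
      have hk1 : k = n+1 := by omega
      subst hk1
      simp only [te, gg, tt]
      split_ifs <;> try (exfalso; omega)
      have hA : (((n+2)+2*(n+1)).factorial : ℝ)
          = (3*(n:ℝ)+4)*(3*(n:ℝ)+3)*((3*n+2).factorial : ℝ) := by
        rw [fexp _ ((3*n+2)+1+1) (by omega), fs, fs]; push_cast; ring_nf
      have hB : (((n+2)-(n+1)).factorial : ℝ) = 1 := by
        rw [fexp _ 1 (by omega)]; simp
      have hC : ((3*(n+1)+1).factorial : ℝ)
          = (3*(n:ℝ)+4)*(3*(n:ℝ)+3)*((3*n+2).factorial : ℝ) := by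
        rw [fexp _ ((3*n+2)+1+1) (by omega), fs, fs]; push_cast; ring_nf
      have hD : (((n+1)+2*(n+1)).factorial : ℝ)
          = (3*(n:ℝ)+3)*((3*n+2).factorial : ℝ) := by
        rw [fexp _ ((3*n+2)+1) (by omega), fs]; push_cast; ring_nf
      have hE : (((n+1)-(n+1)).factorial : ℝ) = 1 := by
        rw [fexp _ 0 (by omega)]; simp
      have hF : ((n+2*(n+1+1)).factorial : ℝ)
          = (3*(n:ℝ)+4)*(3*(n:ℝ)+3)*((3*n+2).factorial : ℝ) := by
        rw [fexp _ ((3*n+2)+1+1) (by omega), fs, fs]; push_cast; ring_nf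
      have hG : ((n+2-(n+1+1)).factorial : ℝ) = 1 := by
        rw [fexp _ 0 (by omega)]; simp
      have hH : ((3*(n+1+1)).factorial : ℝ)
          = (3*(n:ℝ)+6)*(3*(n:ℝ)+5)*(3*(n:ℝ)+4)*(3*(n:ℝ)+3)*((3*n+2).factorial : ℝ) := by
        rw [fexp _ ((3*n+2)+1+1+1+1) (by omega), fs, fs, fs, fs]; push_cast; ring_nf
      have hI : ((n+2*(n+1)).factorial : ℝ) = ((3*n+2).factorial : ℝ) := by
        rw [fexp _ (3*n+2) (by omega)]
      have hJ : ((n+2-(n+1)).factorial : ℝ) = 1 := by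
        rw [fexp _ 1 (by omega)]; simp
      have hK : ((3*(n+1)).factorial : ℝ)
          = (3*(n:ℝ)+3)*((3*n+2).factorial : ℝ) := by
        rw [fexp _ ((3*n+2)+1) (by omega), fs]; push_cast; ring_nf
      rw [hA, hB, hC, hD, hE, hF, hG, hH, hI, hK]
      have h1 := fac_ne (3*n+2)
      push_cast
      field_simp
      ring
  · -- k ≤ n
    obtain ⟨j, rfl⟩ : ∃ j, n = k + j := ⟨n - k, by omega⟩
    simp only [te, gg, tt]
    split_ifs <;> try (exfalso; omega)
    have hA : ((k+j+2+2*k).factorial : ℝ)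
        = (3*(k:ℝ)+j+2)*(3*(k:ℝ)+j+1)*((3*k+j).factorial : ℝ) := by
      rw [fexp _ ((3*k+j)+1+1) (by omega), fs, fs]; push_cast; ring_nf
    have hB : ((k+j+2-k).factorial : ℝ)
        = ((j:ℝ)+2)*((j:ℝ)+1)*((j).factorial : ℝ) := by
      rw [fexp _ (j+1+1) (by omega), fs, fs]; push_cast; ring_nf
    have hC : ((3*k+1).factorial : ℝ) = (3*(k:ℝ)+1)*((3*k).factorial : ℝ) := by
      rw [fexp _ ((3*k)+1) (by omega), fs]; push_cast; ring_nf
    have hD : ((k+j+1+2*k).factorial : ℝ)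
        = (3*(k:ℝ)+j+1)*((3*k+j).factorial : ℝ) := by
      rw [fexp _ ((3*k+j)+1) (by omega), fs]; push_cast; ring_nf
    have hE : ((k+j+1-k).factorial : ℝ) = ((j:ℝ)+1)*((j).factorial : ℝ) := by
      rw [fexp _ (j+1) (by omega), fs]
    have hF : ((k+j+2*k).factorial : ℝ) = ((3*k+j).factorial : ℝ) := by
      rw [fexp _ (3*k+j) (by omega)]
    have hG : ((k+j-k).factorial : ℝ) = ((j).factorial : ℝ) := by
      rw [fexp _ j (by omega)]
    have hH : ((k+j+2*(k+1)).factorial : ℝ)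
        = (3*(k:ℝ)+j+2)*(3*(k:ℝ)+j+1)*((3*k+j).factorial : ℝ) := by
      rw [fexp _ ((3*k+j)+1+1) (by omega), fs, fs]; push_cast; ring_nf
    have hI : ((k+j+2-(k+1)).factorial : ℝ) = ((j:ℝ)+1)*((j).factorial : ℝ) := by
      rw [fexp _ (j+1) (by omega), fs]
    have hJ : ((3*(k+1)).factorial : ℝ)
        = (3*(k:ℝ)+3)*(3*(k:ℝ)+2)*(3*(k:ℝ)+1)*((3*k).factorial : ℝ) := by
      rw [fexp _ ((3*k)+1+1+1) (by omega), fs, fs, fs]; push_cast; ring_nf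
    rw [hA, hB, hC, hD, hE, hF, hG, hH, hI, hJ]
    have h1 := fac_ne (3*k+j)
    have h2 := fac_ne j
    have h3 := fac_ne (3*k)
    push_cast
    field_simp
    ring

noncomputable def Tn (n : ℕ) : ℝ := ∑ k ∈ Finset.range (n+1), tt n k
noncomputable def Rn (n : ℕ) : ℝ := (4 * (-8 : ℝ) ^ n - 1) / (3 * (3 * (n:ℝ) + 1) * 4 ^ n)

lemma Trec (n : ℕ) :
    4*(3*(n:ℝ)+7) * Tn (n+2) + 7*(3*(n:ℝ)+4) * Tn (n+1) - 2*(3*(n:ℝ)+1) * Tn n = 0 := by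
  have h2 : Tn (n+1) = ∑ k ∈ Finset.range (n+3), te (n+1) k := by
    rw [Finset.sum_range_succ, show te (n+1) (n+2) = 0 from if_neg (by omega), add_zero]
    exact Finset.sum_congr rfl fun k hk => by
      rw [te, if_pos (by simpa [Nat.lt_succ_iff] using Finset.mem_range.mp hk)]
  have h3 : Tn n = ∑ k ∈ Finset.range (n+3), te n k := by
    rw [Finset.sum_range_succ, Finset.sum_range_succ,
      show te n (n+2) = 0 from if_neg (by omega), show te n (n+1) = 0 from if_neg (by omega),
      add_zero, add_zero]
    exact Finset.sum_congr rfl fun k hk => by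
      rw [te, if_pos (by simpa [Nat.lt_succ_iff] using Finset.mem_range.mp hk)]
  have h1 : Tn (n+2) = ∑ k ∈ Finset.range (n+3), tt (n+2) k := rfl
  rw [h1, h2, h3, Finset.mul_sum, Finset.mul_sum, Finset.mul_sum, ← Finset.sum_add_distrib,
    ← Finset.sum_sub_distrib]
  have : ∑ k ∈ Finset.range (n+3),
      (4*(3*(n:ℝ)+7) * tt (n+2) k + 7*(3*(n:ℝ)+4) * te (n+1) k - 2*(3*(n:ℝ)+1) * te n k)
      = ∑ k ∈ Finset.range (n+3), (gg n (k+1) - gg n k) :=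
    Finset.sum_congr rfl fun k hk => step n k (by
      have := Finset.mem_range.mp hk; omega)
  rw [this, Finset.sum_range_sub (gg n)]
  have g0 : gg n 0 = 0 := by simp [gg]
  have gtop : gg n (n+3) = 0 := if_neg (by omega)
  rw [g0, gtop, sub_zero]

lemma Rrec (n : ℕ) :
    4*(3*(n:ℝ)+7) * Rn (n+2) + 7*(3*(n:ℝ)+4) * Rn (n+1) - 2*(3*(n:ℝ)+1) * Rn n = 0 := by
  simp only [Rn]
  have h1 : (3*((n:ℝ)+2)+1) ≠ 0 := by positivity
  have h2 : (3*((n:ℝ)+1)+1) ≠ 0 := by positivity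
  have h3 : (3*(n:ℝ)+1) ≠ 0 := by positivity
  have h4 : ((4:ℝ))^n ≠ 0 := by positivity
  have h5 : ((-8:ℝ))^n ≠ 0 := pow_ne_zero _ (by norm_num)
  push_cast
  rw [pow_succ, pow_succ, pow_succ, pow_succ]
  field_simp
  ring

lemma base0 : Tn 0 = Rn 0 := by
  simp [Tn, tt, Rn, Nat.factorial]
  norm_num

lemma base1 : Tn 1 = Rn 1 := by
  rw [Tn, Finset.sum_range_succ, Finset.sum_range_succ, Finset.sum_range_zero]
  simp [tt, Rn, Nat.factorial]
  norm_num

lemma TR : ∀ n, Tn n = Rn n ∧ Tn (n+1) = Rn (n+1) := by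
  intro n
  induction n with
  | zero => exact ⟨base0, base1⟩
  | succ n ih =>
    refine ⟨ih.2, ?_⟩
    have hT := Trec n
    have hR := Rrec n
    have hc : (4*(3*(n:ℝ)+7)) ≠ 0 := by positivity
    have : 4*(3*(n:ℝ)+7) * Tn (n+2) = 4*(3*(n:ℝ)+7) * Rn (n+2) := by
      rw [ih.1, ih.2] at hT
      linarith
    exact mul_left_cancel₀ hc this

theorem stmt9 (n : ℕ) :
    ∑ k ∈ Finset.range (n+1),
      poch (-(n:ℝ)) k * poch (((n:ℝ)+1)/2) k * poch (((n:ℝ)+2)/2) k /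
        (poch (2/3) k * poch (4/3) k * (Nat.factorial k))
      = (4 * (-8 : ℝ) ^ n - 1) / (3 * (3 * (n:ℝ) + 1) * 4 ^ n) := by
  have h : (∑ k ∈ Finset.range (n+1),
      poch (-(n:ℝ)) k * poch (((n:ℝ)+1)/2) k * poch (((n:ℝ)+2)/2) k /
        (poch (2/3) k * poch (4/3) k * (Nat.factorial k))) = Tn n := by
    refine Finset.sum_congr rfl fun k hk => summand_eq n k ?_
    have := Finset.mem_range.mp hk; omega
  rw [h]
  exact (TR n).1
end

section
/- For every nonnegative integer n, ₃F₂(-n, (n+1)/2, (n+2)/2; 1/3, 2/3; 1) = (1 + 2(9n+4)·(-8)ⁿ)/(9·4ⁿ). -/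
open scoped BigOperators

/-- The scaled summand `(-27/4)^k C(n+2k, 3k)`. -/
noncomputable def sTerm (n k : ℕ) : ℝ := (-27/4 : ℝ) ^ k * ((n + 2*k).choose (3*k))

/-- Zeilberger certificate term. -/
noncomputable def hTerm (n k : ℕ) : ℝ :=
  if k = 0 then 0 else -64 * (-27/4 : ℝ) ^ k * ((n + 2*k).choose (3*k - 3))

lemma cast_choose_mul (m r : ℕ) :
    ((m.choose r : ℝ)) * (r.factorial : ℝ) = ∏ i ∈ Finset.range r, ((m:ℝ) - i) := by
  induction r with
  | zero => simp
  | succ r ih =>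
    rw [Finset.prod_range_succ, ← ih]
    rcases lt_or_ge r m with hrm | hrm
    · have h := Nat.choose_succ_right_eq m r
      have hc : ((m.choose (r+1) : ℝ)) * (r+1) = (m.choose r : ℝ) * ((m:ℝ) - r) := by
        have := congrArg (fun x : ℕ => (x : ℝ)) h
        push_cast [Nat.cast_sub hrm.le] at this
        push_cast
        linarith [this]
      have : ((r+1).factorial : ℝ) = (r+1) * (r.factorial : ℝ) := by
        rw [Nat.factorial_succ]; push_cast; ring
      rw [this]
      nlinarith [hc]
    · have h0 : m.choose (r+1) = 0 := Nat.choose_eq_zero_of_lt (by omega)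
      rw [h0]
      rcases eq_or_lt_of_le hrm with heq | hlt
      · subst heq
        simp
      · have h0' : m.choose r = 0 := Nat.choose_eq_zero_of_lt hlt
        rw [h0']
        simp

lemma key (n k : ℕ) :
    64 * sTerm (n+3) k + 240 * sTerm (n+2) k + 192 * sTerm (n+1) k - 64 * sTerm n k
      = hTerm n (k+1) - hTerm n k := by
  rcases k with _ | j
  · simp [sTerm, hTerm]
    norm_num
  · have hkne : j + 1 ≠ 0 := by omega
    have hk1ne : j + 2 ≠ 0 := by omega
    have h3k : 3 * (j+1) - 3 = 3 * j := by omega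
    have hFj : ((3*j).factorial : ℝ) ≠ 0 := by positivity
    set x : ℝ := (n : ℝ) with hx
    set g : ℕ → ℝ := (fun i => x + 2*j + 2 - i) with hg
    set P : ℝ := ∏ i ∈ Finset.range (3*j), g i with hP
    have f0 : ∀ (c : ℕ), (((n + c + 2*(j+1)).choose (3*(j+1)) : ℝ)) * ((3*(j+1)).factorial : ℝ)
        = ∏ i ∈ Finset.range (3*j+3), (g i + c) := by
      intro c
      rw [cast_choose_mul]
      have hr : 3*(j+1) = 3*j+3 := by omega
      rw [hr]
      apply Finset.prod_congr rfl
      intro i _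
      simp only [hg]
      push_cast
      ring
    have gshift : ∀ (c : ℝ) (i : ℕ), g (i+1) + (c+1) = g i + c := by
      intro c i
      simp only [hg]
      push_cast
      ring
    have e0 : (∏ i ∈ Finset.range (3*j+3), (g i + 0))
        = P * g (3*j) * g (3*j+1) * g (3*j+2) := by
      simp only [add_zero]
      rw [Finset.prod_range_succ, Finset.prod_range_succ, Finset.prod_range_succ]
    have peel1 : ∀ (c : ℝ), (∏ i ∈ Finset.range (3*j+3), (g i + (c+1)))
        = (∏ i ∈ Finset.range (3*j+2), (g i + c)) * (g 0 + (c+1)) := by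
      intro c
      rw [Finset.prod_range_succ' (fun i => g i + (c+1))]
      congr 1
      apply Finset.prod_congr rfl
      intro i _
      exact gshift c i
    have peel1' : ∀ (c : ℝ), (∏ i ∈ Finset.range (3*j+2), (g i + (c+1)))
        = (∏ i ∈ Finset.range (3*j+1), (g i + c)) * (g 0 + (c+1)) := by
      intro c
      rw [Finset.prod_range_succ' (fun i => g i + (c+1))]
      congr 1
      apply Finset.prod_congr rfl
      intro i _
      exact gshift c i
    have peel1'' : ∀ (c : ℝ), (∏ i ∈ Finset.range (3*j+1), (g i + (c+1)))
        = (∏ i ∈ Finset.range (3*j), (g i + c)) * (g 0 + (c+1)) := by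
      intro c
      rw [Finset.prod_range_succ' (fun i => g i + (c+1))]
      congr 1
      apply Finset.prod_congr rfl
      intro i _
      exact gshift c i
    have ezero : ∀ (M : ℕ), (∏ i ∈ Finset.range M, (g i + (0:ℝ))) = ∏ i ∈ Finset.range M, g i := by
      intro M
      apply Finset.prod_congr rfl
      intro i _
      ring
    have e1 : (∏ i ∈ Finset.range (3*j+3), (g i + (1:ℝ)))
        = P * g (3*j) * g (3*j+1) * (g 0 + 1) := by
      have h01 : (1:ℝ) = 0 + 1 := by norm_num
      rw [h01, peel1, ezero, Finset.prod_range_succ, Finset.prod_range_succ]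
    have e2 : (∏ i ∈ Finset.range (3*j+3), (g i + (2:ℝ)))
        = P * g (3*j) * (g 0 + 1) * (g 0 + 2) := by
      have h12 : (2:ℝ) = 1 + 1 := by norm_num
      rw [h12, peel1]
      have h01 : (1:ℝ) = 0 + 1 := by norm_num
      rw [h01, peel1', ezero, Finset.prod_range_succ]
    have e3 : (∏ i ∈ Finset.range (3*j+3), (g i + (3:ℝ)))
        = P * (g 0 + 1) * (g 0 + 2) * (g 0 + 3) := by
      have h23 : (3:ℝ) = 2 + 1 := by norm_num
      rw [h23, peel1]
      have h12 : (2:ℝ) = 1 + 1 := by norm_num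
      rw [h12, peel1']
      have h01 : (1:ℝ) = 0 + 1 := by norm_num
      rw [h01, peel1'', ezero]
    have hFk : ((3*(j+1)).factorial : ℝ) ≠ 0 := by positivity
    have c0 : ((n + 2*(j+1)).choose (3*(j+1)) : ℝ)
        = (P * g (3*j) * g (3*j+1) * g (3*j+2)) / ((3*(j+1)).factorial : ℝ) := by
      rw [eq_div_iff hFk]
      have hn0 : n + 2*(j+1) = n + 0 + 2*(j+1) := by omega
      rw [hn0, f0 0]
      rw [show ((0:ℕ):ℝ) = (0:ℝ) from by norm_num]
      rw [e0]
    have c1 : ((n + 1 + 2*(j+1)).choose (3*(j+1)) : ℝ)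
        = (P * g (3*j) * g (3*j+1) * (g 0 + 1)) / ((3*(j+1)).factorial : ℝ) := by
      rw [eq_div_iff hFk, f0 1, ← e1]
      apply Finset.prod_congr rfl
      intro i _
      norm_num
    have c2 : ((n + 2 + 2*(j+1)).choose (3*(j+1)) : ℝ)
        = (P * g (3*j) * (g 0 + 1) * (g 0 + 2)) / ((3*(j+1)).factorial : ℝ) := by
      rw [eq_div_iff hFk, f0 2, ← e2]
      apply Finset.prod_congr rfl
      intro i _
      norm_num
    have c3 : ((n + 3 + 2*(j+1)).choose (3*(j+1)) : ℝ)
        = (P * (g 0 + 1) * (g 0 + 2) * (g 0 + 3)) / ((3*(j+1)).factorial : ℝ) := by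
      rw [eq_div_iff hFk, f0 3, ← e3]
      apply Finset.prod_congr rfl
      intro i _
      norm_num
    have cB : ((n + 2*(j+2)).choose (3*(j+1)) : ℝ)
        = (P * g (3*j) * (g 0 + 1) * (g 0 + 2)) / ((3*(j+1)).factorial : ℝ) := by
      have : n + 2*(j+2) = n + 2 + 2*(j+1) := by omega
      rw [this]
      exact c2
    have cC : ((n + 2*(j+1)).choose (3*j) : ℝ) = P / ((3*j).factorial : ℝ) := by
      rw [eq_div_iff hFj, cast_choose_mul]
      apply Finset.prod_congr rfl
      intro i _
      simp only [hg]
      push_cast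
      ring
    have hfac : ((3*(j+1)).factorial : ℝ)
        = ((3*j).factorial : ℝ) * (3*(j:ℝ)+1) * (3*(j:ℝ)+2) * (3*(j:ℝ)+3) := by
      have h1 : 3*(j+1) = (3*j+2) + 1 := by omega
      rw [h1, Nat.factorial_succ]
      have h2 : 3*j+2 = (3*j+1) + 1 := by omega
      rw [h2, Nat.factorial_succ, Nat.factorial_succ]
      push_cast
      ring
    have hT1 : hTerm n (j+1) = -64 * (-27/4 : ℝ)^(j+1) * ((n + 2*(j+1)).choose (3*j)) := by
      rw [hTerm, if_neg hkne, h3k]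
    have hT2 : hTerm n (j+1+1) = -64 * (-27/4 : ℝ)^(j+1+1) * ((n + 2*(j+2)).choose (3*(j+1))) := by
      rw [hTerm, if_neg (by omega : j+1+1 ≠ 0)]
      rw [show 3*(j+1+1) - 3 = 3*(j+1) from by omega, show n + 2*(j+1+1) = n + 2*(j+2) from by omega]
    simp only [sTerm]
    rw [hT1, hT2, c3, c2, c1, c0, cB, cC, hfac]
    simp only [hg]
    push_cast
    have h3j1 : (3*(j:ℝ)+1) ≠ 0 := by positivity
    have h3j2 : (3*(j:ℝ)+2) ≠ 0 := by positivity
    have h3j3 : (3*(j:ℝ)+3) ≠ 0 := by positivity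
    field_simp
    ring

/-- The partial sums. -/
noncomputable def Sfin (n : ℕ) : ℝ := ∑ k ∈ Finset.range (n+1), sTerm n k

lemma sum_ext (n m : ℕ) (hm : n + 1 ≤ m) :
    ∑ k ∈ Finset.range m, sTerm n k = Sfin n := by
  rw [Sfin]
  symm
  apply Finset.sum_subset
  · intro i hi
    simp only [Finset.mem_range] at *
    omega
  · intro i hi hni
    simp only [Finset.mem_range, not_lt] at *
    have : (n + 2*i).choose (3*i) = 0 := Nat.choose_eq_zero_of_lt (by omega)
    simp [sTerm, this]

lemma recur (n : ℕ) :
    64 * Sfin (n+3) + 240 * Sfin (n+2) + 192 * Sfin (n+1) - 64 * Sfin n = 0 := by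
  have h3 := sum_ext (n+3) (n+4) (by omega)
  have h2 := sum_ext (n+2) (n+4) (by omega)
  have h1 := sum_ext (n+1) (n+4) (by omega)
  have h0 := sum_ext n (n+4) (by omega)
  rw [← h3, ← h2, ← h1, ← h0]
  have : ∑ k ∈ Finset.range (n+4), (hTerm n (k+1) - hTerm n k)
      = hTerm n (n+4) - hTerm n 0 := Finset.sum_range_sub (hTerm n) (n+4)
  have hend : hTerm n (n+4) = 0 := by
    have : (n + 2*(n+4)).choose (3*(n+4) - 3) = 0 := Nat.choose_eq_zero_of_lt (by omega)
    simp [hTerm, this]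
  have h00 : hTerm n 0 = 0 := by simp [hTerm]
  calc 64 * (∑ k ∈ Finset.range (n+4), sTerm (n+3) k)
        + 240 * (∑ k ∈ Finset.range (n+4), sTerm (n+2) k)
        + 192 * (∑ k ∈ Finset.range (n+4), sTerm (n+1) k)
        - 64 * (∑ k ∈ Finset.range (n+4), sTerm n k)
      = ∑ k ∈ Finset.range (n+4),
          (64 * sTerm (n+3) k + 240 * sTerm (n+2) k + 192 * sTerm (n+1) k - 64 * sTerm n k) := by
        rw [Finset.sum_sub_distrib, Finset.sum_add_distrib, Finset.sum_add_distrib,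
            Finset.mul_sum, Finset.mul_sum, Finset.mul_sum, Finset.mul_sum]
    _ = ∑ k ∈ Finset.range (n+4), (hTerm n (k+1) - hTerm n k) := by
        apply Finset.sum_congr rfl
        intro k _
        exact key n k
    _ = hTerm n (n+4) - hTerm n 0 := this
    _ = 0 := by rw [hend, h00]; ring

lemma closed : ∀ n : ℕ, Sfin n = (1 + 2 * (9 * (n:ℝ) + 4) * (-8 : ℝ) ^ n) / (9 * 4 ^ n) := by
  have base0 : Sfin 0 = (1 + 2 * (9 * (0:ℝ) + 4) * (-8 : ℝ) ^ 0) / (9 * 4 ^ 0) := by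
    simp [Sfin, sTerm]
    norm_num
  have base1 : Sfin 1 = (1 + 2 * (9 * (1:ℝ) + 4) * (-8 : ℝ) ^ 1) / (9 * 4 ^ 1) := by
    rw [Sfin]
    rw [Finset.sum_range_succ, Finset.sum_range_succ, Finset.sum_range_zero]
    simp [sTerm]
    norm_num
  have base2 : Sfin 2 = (1 + 2 * (9 * (2:ℝ) + 4) * (-8 : ℝ) ^ 2) / (9 * 4 ^ 2) := by
    rw [Sfin]
    rw [Finset.sum_range_succ, Finset.sum_range_succ, Finset.sum_range_succ,
        Finset.sum_range_zero]
    simp [sTerm]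
    norm_num [Nat.choose]
  intro n
  induction n using Nat.strong_induction_on with
  | _ n ih =>
    match n with
    | 0 => simpa using base0
    | 1 => simpa using base1
    | 2 => simpa using base2
    | (m+3) =>
      have i0 := ih m (by omega)
      have i1 := ih (m+1) (by omega)
      have i2 := ih (m+2) (by omega)
      have hr := recur m
      rw [i0, i1, i2] at hr
      have h4 : (4:ℝ)^m ≠ 0 := by positivity
      have e3 : ((-8:ℝ))^(m+3) = (-8)^m * (-512) := by ring
      have e2 : ((-8:ℝ))^(m+2) = (-8)^m * 64 := by ring
      have e1 : ((-8:ℝ))^(m+1) = (-8)^m * (-8) := by ring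
      have f3 : ((4:ℝ))^(m+3) = 4^m * 64 := by ring
      have f2 : ((4:ℝ))^(m+2) = 4^m * 16 := by ring
      have f1 : ((4:ℝ))^(m+1) = 4^m * 4 := by ring
      have hS : Sfin (m+3)
          = (-(240 * ((1 + 2 * (9 * ((m+2:ℕ):ℝ) + 4) * (-8)^(m+2)) / (9 * 4^(m+2))))
            - 192 * ((1 + 2 * (9 * ((m+1:ℕ):ℝ) + 4) * (-8)^(m+1)) / (9 * 4^(m+1)))
            + 64 * ((1 + 2 * (9 * ((m:ℕ):ℝ) + 4) * (-8)^m) / (9 * 4^m)))/64 := by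
        linarith [hr]
      rw [hS, e3, e2, e1, f3, f2, f1]
      push_cast
      field_simp
      ring

-- Pochhammer lemmas
lemma pochA (k : ℕ) :
    poch (1/3) k * poch (2/3) k * 27 ^ k * (k.factorial : ℝ) = ((3*k).factorial : ℝ) := by
  induction k with
  | zero => simp [poch]
  | succ k ih =>
    have h1 : poch (1/3) (k+1) = poch (1/3) k * (1/3 + k) := Finset.prod_range_succ _ k
    have h2 : poch (2/3) (k+1) = poch (2/3) k * (2/3 + k) := Finset.prod_range_succ _ k
    have hf : ((k+1).factorial : ℝ) = (k+1) * (k.factorial : ℝ) := by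
      rw [Nat.factorial_succ]; push_cast; ring
    have hf3 : ((3*(k+1)).factorial : ℝ)
        = ((3*k).factorial : ℝ) * (3*k+1) * (3*k+2) * (3*k+3) := by
      have e : 3*(k+1) = (3*k+2) + 1 := by omega
      rw [e, Nat.factorial_succ]
      have e2 : 3*k+2 = (3*k+1) + 1 := by omega
      rw [e2, Nat.factorial_succ, Nat.factorial_succ]
      push_cast
      ring
    rw [h1, h2, hf, hf3, ← ih]
    push_cast
    ring

lemma pochB (n k : ℕ) :
    poch (((n:ℝ)+1)/2) k * poch (((n:ℝ)+2)/2) k * 4 ^ k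
      = ∏ i ∈ Finset.range (2*k), ((n:ℝ) + 1 + i) := by
  induction k with
  | zero => simp [poch]
  | succ k ih =>
    have h1 : poch (((n:ℝ)+1)/2) (k+1) = poch (((n:ℝ)+1)/2) k * (((n:ℝ)+1)/2 + k) :=
      Finset.prod_range_succ _ k
    have h2 : poch (((n:ℝ)+2)/2) (k+1) = poch (((n:ℝ)+2)/2) k * (((n:ℝ)+2)/2 + k) :=
      Finset.prod_range_succ _ k
    have e : 2*(k+1) = (2*k + 1) + 1 := by omega
    rw [h1, h2, e, Finset.prod_range_succ, Finset.prod_range_succ, ← ih]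
    push_cast
    ring

lemma pochC (n k : ℕ) :
    poch (-(n:ℝ)) k = (-1) ^ k * ∏ i ∈ Finset.range k, ((n:ℝ) - i) := by
  induction k with
  | zero => simp [poch]
  | succ k ih =>
    have h1 : poch (-(n:ℝ)) (k+1) = poch (-(n:ℝ)) k * (-(n:ℝ) + k) :=
      Finset.prod_range_succ _ k
    rw [h1, ih, Finset.prod_range_succ]
    ring

lemma prod_merge (n k : ℕ) :
    (∏ i ∈ Finset.range k, ((n:ℝ) - i)) * (∏ i ∈ Finset.range (2*k), ((n:ℝ) + 1 + i))
      = ((n + 2*k).choose (3*k) : ℝ) * ((3*k).factorial : ℝ) := by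
  rw [cast_choose_mul]
  have h3 : 3*k = 2*k + k := by omega
  rw [h3, Finset.prod_range_add]
  have hrefl : (∏ i ∈ Finset.range (2*k), ((n:ℝ) + 1 + i))
      = ∏ i ∈ Finset.range (2*k), (((n + 2*k : ℕ) : ℝ) - i) := by
    rw [← Finset.prod_range_reflect (fun i => (((n + 2*k : ℕ) : ℝ) - i)) (2*k)]
    apply Finset.prod_congr rfl
    intro i hi
    simp only [Finset.mem_range] at hi
    have h1 : 2*k - 1 - i = 2*k - (i+1) := by omega
    rw [h1, Nat.cast_sub (by omega : i+1 ≤ 2*k)]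
    push_cast
    ring
  have hsec : (∏ i ∈ Finset.range k, ((n:ℝ) - i))
      = ∏ i ∈ Finset.range k, ((((n + 2*k : ℕ)) : ℝ) - ((2*k + i : ℕ) : ℝ)) := by
    apply Finset.prod_congr rfl
    intro i _
    push_cast
    ring
  rw [hrefl, hsec]
  exact mul_comm _ _

lemma term_eq (n k : ℕ) :
    poch (-(n:ℝ)) k * poch (((n:ℝ)+1)/2) k * poch (((n:ℝ)+2)/2) k /
        (poch (1/3) k * poch (2/3) k * (Nat.factorial k)) = sTerm n k := by
  have hA := pochA k
  have hB := pochB n k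
  have hC := pochC n k
  have hM := prod_merge n k
  have h27 : (27:ℝ)^k ≠ 0 := by positivity
  have h4 : (4:ℝ)^k ≠ 0 := by positivity
  have hkf : ((k.factorial : ℝ)) ≠ 0 := by positivity
  have hFk : ((3*k).factorial : ℝ) ≠ 0 := by positivity
  have hden : poch (1/3) k * poch (2/3) k * (Nat.factorial k : ℝ)
      = ((3*k).factorial : ℝ) / 27^k := by
    rw [eq_div_iff h27]
    linarith [hA]
  have hnum : poch (-(n:ℝ)) k * poch (((n:ℝ)+1)/2) k * poch (((n:ℝ)+2)/2) k
      = (-1)^k * (((n + 2*k).choose (3*k) : ℝ) * ((3*k).factorial : ℝ)) / 4^k := by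
    rw [eq_div_iff h4, ← hM]
    calc poch (-(n:ℝ)) k * poch (((n:ℝ)+1)/2) k * poch (((n:ℝ)+2)/2) k * 4^k
        = poch (-(n:ℝ)) k * (poch (((n:ℝ)+1)/2) k * poch (((n:ℝ)+2)/2) k * 4^k) := by ring
      _ = ((-1) ^ k * ∏ i ∈ Finset.range k, ((n:ℝ) - i))
            * ∏ i ∈ Finset.range (2*k), ((n:ℝ) + 1 + i) := by rw [hC, hB]
      _ = (-1)^k * ((∏ i ∈ Finset.range k, ((n:ℝ) - i))
            * ∏ i ∈ Finset.range (2*k), ((n:ℝ) + 1 + i)) := by ring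
  have hpow : ((-27/4:ℝ))^k = ((-1:ℝ))^k * 27^k / 4^k := by
    rw [show ((-27/4:ℝ)) = ((-1) * 27 / 4) from by norm_num, div_pow, mul_pow]
  rw [hden, hnum, sTerm, hpow]
  field_simp

theorem stmt11 (n : ℕ) :
    ∑ k ∈ Finset.range (n+1),
      poch (-(n:ℝ)) k * poch (((n:ℝ)+1)/2) k * poch (((n:ℝ)+2)/2) k /
        (poch (1/3) k * poch (2/3) k * (Nat.factorial k))
      = (1 + 2 * (9 * (n:ℝ) + 4) * (-8 : ℝ) ^ n) / (9 * 4 ^ n) := by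
  rw [← closed n, Sfin]
  apply Finset.sum_congr rfl
  intro k _
  exact term_eq n k
end
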